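/- arXiv:2105.07587 — 3 statements merged into one kernel-verified Lean document; each statement's English description precedes it below -/
import Mathlib

section
/- Isotonic regression is 1-Lipschitz in the l1 norm in the following summed sense: for any fixed ordering and any y, y' in R^n, sum_{i=1}^n |iso(y)_i - iso(y')_i| <= sum_{i=1}^n |y_i - y'_i|. Consequently, for any vector a in R^n with entries bounded by M_x, the map y -> <a, iso(y)> is M_x-Lipschitz with respect to the l1 metric on R^n. -/
/-!
Isotonic regression is the nearest-point map onto a convex cone that is a lattice and is
invariant under adding constants. Testing the optimality of `u = iso y` and `u' = iso y'` against
`u ⊓ u'` and `u ⊔ u'` shows that the map is order preserving, and testing against `u ± 1` shows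
that it preserves the total sum.
Any order-preserving, sum-preserving map `T` is an ℓ₁-contraction (Crandall–Tartar):
`(T y - T y')⁺ ≤ T (y ⊔ y') - T y'` pointwise, and summing gives `∑ (T y - T y')⁺ ≤ ∑ (y - y')⁺`.
-/

open Finset

variable {ι : Type*}

theorem nonpos_of_forall_mul_le_sq_mul {c q : ℝ} (hq : 0 ≤ q)
    (h : ∀ t : ℝ, 0 < t → t ≤ 1 → 2 * t * c ≤ t ^ 2 * q) : c ≤ 0 := by
  by_contra! hc
  set t := min 1 (c / (q + 1))
  have ht : 0 < t := lt_min one_pos (div_pos hc (by linarith))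
  have htc : t * (q + 1) ≤ c := (le_div_iff₀ (by linarith)).1 (min_le_right _ _)
  nlinarith [h t ht (min_le_left _ _), mul_le_mul_of_nonneg_left htc ht.le]

section Fintype

variable [Fintype ι]

def IsNearestPoint (C : Set (ι → ℝ)) (v u : ι → ℝ) : Prop :=
  u ∈ C ∧ ∀ z ∈ C, ∑ i, (v i - u i) ^ 2 ≤ ∑ i, (v i - z i) ^ 2

namespace IsNearestPoint

variable {C : Set (ι → ℝ)}

theorem sum_mul_sub_nonpos {v u z : ι → ℝ} (hC : Convex ℝ C) (h : IsNearestPoint C v u)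
    (hz : z ∈ C) : ∑ i, (v i - u i) * (z i - u i) ≤ 0 := by
  refine nonpos_of_forall_mul_le_sq_mul (q := ∑ i, (z i - u i) ^ 2) (by positivity)
    fun t ht ht1 => ?_
  have hmem : (1 - t) • u + t • z ∈ C := hC h.1 hz (by linarith) ht.le (by ring)
  have hexpand : ∑ i, (v i - ((1 - t) • u + t • z) i) ^ 2 = ∑ i, (v i - u i) ^ 2
      - 2 * t * ∑ i, (v i - u i) * (z i - u i) + t ^ 2 * ∑ i, (z i - u i) ^ 2 := by
    simp only [mul_sum, ← sum_sub_distrib, ← sum_add_distrib]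
    refine sum_congr rfl fun i _ => ?_
    simp only [Pi.add_apply, Pi.smul_apply, smul_eq_mul]
    ring
  linarith [h.2 _ hmem]

theorem sum_eq {v u : ι → ℝ} (hC : Convex ℝ C)
    (hC_add_const : ∀ ⦃z⦄, z ∈ C → ∀ c : ℝ, (z + fun _ => c) ∈ C) (h : IsNearestPoint C v u) :
    ∑ i, u i = ∑ i, v i := by
  have key : ∀ c : ℝ, (∑ i, (v i - u i)) * c ≤ 0 := fun c => by
    rw [sum_mul]
    simpa using h.sum_mul_sub_nonpos hC (hC_add_const h.1 c)
  have h₁ := key 1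
  have h₂ := key (-1)
  rw [sum_sub_distrib] at h₁ h₂
  linarith

theorem le_of_le (hC : Convex ℝ C) (hinf : ∀ ⦃z w⦄, z ∈ C → w ∈ C → z ⊓ w ∈ C)
    (hsup : ∀ ⦃z w⦄, z ∈ C → w ∈ C → z ⊔ w ∈ C) {y y' u u' : ι → ℝ}
    (hu : IsNearestPoint C y u) (hu' : IsNearestPoint C y' u') (hy : y ≤ y') : u ≤ u' := by
  have h₁ := hu.sum_mul_sub_nonpos hC (hinf hu.1 hu'.1)
  have h₂ := hu'.sum_mul_sub_nonpos hC (hsup hu.1 hu'.1)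
  have hterm : ∀ i, (u i - u' i) * (u i - u' i)⁺
      ≤ (y i - u i) * ((u ⊓ u') i - u i) + (y' i - u' i) * ((u ⊔ u') i - u' i) := fun i => by
    have hinf_sub : (u ⊓ u') i - u i = -(u i - u' i)⁺ := by
      rcases le_total (u i) (u' i) with h | h <;> simp [h]
    have hsup_sub : (u ⊔ u') i - u' i = (u i - u' i)⁺ := by
      rcases le_total (u i) (u' i) with h | h <;> simp [h]
    rw [hinf_sub, hsup_sub]
    -- the right side is `((y' i - y i) + (u i - u' i)) * (u i - u' i)⁺`
    nlinarith [hy i, posPart_nonneg (u i - u' i)]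
  have hnonneg : ∀ i, 0 ≤ (u i - u' i) * (u i - u' i)⁺ := fun i => by
    rcases le_total (u i) (u' i) with h | h <;> simp [h, mul_self_nonneg]
  have hsum : ∑ i, (u i - u' i) * (u i - u' i)⁺ ≤ 0 := by
    have := sum_le_sum fun i (_ : i ∈ univ) => hterm i
    rw [sum_add_distrib] at this
    linarith
  intro i
  by_contra! hi
  have hpos : 0 < (u i - u' i) * (u i - u' i)⁺ := by
    rw [posPart_eq_self.2 (by linarith)]
    nlinarith
  linarith [single_le_sum (fun j _ => hnonneg j) (mem_univ i)]

end IsNearestPoint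

theorem sum_posPart_sub_le_of_monotone_of_sum_eq {T : (ι → ℝ) → ι → ℝ} (hT : Monotone T)
    (hsum : ∀ y, ∑ i, T y i = ∑ i, y i) (y y' : ι → ℝ) :
    ∑ i, (T y i - T y' i)⁺ ≤ ∑ i, (y i - y' i)⁺ := by
  have hle : ∀ i, (T y i - T y' i)⁺ ≤ T (y ⊔ y') i - T y' i := fun i =>
    sup_le (by linarith [hT (le_sup_left : y ≤ y ⊔ y') i])
      (by linarith [hT (le_sup_right : y' ≤ y ⊔ y') i])
  calc ∑ i, (T y i - T y' i)⁺ ≤ ∑ i, (T (y ⊔ y') i - T y' i) := sum_le_sum fun i _ => hle i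
    _ = ∑ i, ((y ⊔ y') i - y' i) := by rw [sum_sub_distrib, sum_sub_distrib, hsum, hsum]
    _ = ∑ i, (y i - y' i)⁺ := sum_congr rfl fun i _ => by
      rw [Pi.sup_apply, sup_eq_add_posPart_sub]
      ring

theorem sum_abs_sub_le_of_monotone_of_sum_eq {T : (ι → ℝ) → ι → ℝ} (hT : Monotone T)
    (hsum : ∀ y, ∑ i, T y i = ∑ i, y i) (y y' : ι → ℝ) :
    ∑ i, |T y i - T y' i| ≤ ∑ i, |y i - y' i| := by
  have habs : ∀ a b : ℝ, |a - b| = (a - b)⁺ + (b - a)⁺ := fun a b => by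
    rw [← neg_sub a b, posPart_neg, posPart_add_negPart]
  simp only [habs, sum_add_distrib]
  exact add_le_add (sum_posPart_sub_le_of_monotone_of_sum_eq hT hsum y y')
    (sum_posPart_sub_le_of_monotone_of_sum_eq hT hsum y' y)

theorem abs_sum_mul_le {a x : ι → ℝ} {M : ℝ} (ha : ∀ i, |a i| ≤ M) :
    |∑ i, a i * x i| ≤ M * ∑ i, |x i| :=
  calc |∑ i, a i * x i| ≤ ∑ i, |a i| * |x i| := by
        simpa only [abs_mul] using abs_sum_le_sum_abs (fun i => a i * x i) univ
    _ ≤ ∑ i, M * |x i| := sum_le_sum fun i _ => mul_le_mul_of_nonneg_right (ha i) (abs_nonneg _)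
    _ = M * ∑ i, |x i| := (mul_sum ..).symm

end Fintype

def monotoneCone (r : ι → ι → Prop) : Set (ι → ℝ) := {z | ∀ i j, r i j → z i ≤ z j}

section monotoneCone

variable {r : ι → ι → Prop} {z w : ι → ℝ}

theorem convex_monotoneCone (r : ι → ι → Prop) : Convex ℝ (monotoneCone r) :=
  fun _ hz _ hw _ _ ha hb _ i j hij =>
    add_le_add (mul_le_mul_of_nonneg_left (hz i j hij) ha)
      (mul_le_mul_of_nonneg_left (hw i j hij) hb)

theorem inf_mem_monotoneCone (hz : z ∈ monotoneCone r) (hw : w ∈ monotoneCone r) :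
    z ⊓ w ∈ monotoneCone r :=
  fun i j hij => inf_le_inf (hz i j hij) (hw i j hij)

theorem sup_mem_monotoneCone (hz : z ∈ monotoneCone r) (hw : w ∈ monotoneCone r) :
    z ⊔ w ∈ monotoneCone r :=
  fun i j hij => sup_le_sup (hz i j hij) (hw i j hij)

theorem add_const_mem_monotoneCone (hz : z ∈ monotoneCone r) (c : ℝ) :
    (z + fun _ => c) ∈ monotoneCone r :=
  fun i j hij => add_le_add_left (hz i j hij) c

end monotoneCone

/-- Isotonic regression (projection onto the monotone cone of a fixed order `r`)
is 1-Lipschitz in the ℓ₁ norm: `∑ |iso(y)ᵢ - iso(y')ᵢ| ≤ ∑ |yᵢ - y'ᵢ|`.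
Consequently, for any `a` with entries bounded by `Mx`, the map `y ↦ ⟨a, iso(y)⟩`
is `Mx`-Lipschitz with respect to the ℓ₁ metric. -/
theorem stmt_7 (n : ℕ) (r : Fin n → Fin n → Prop)
    (iso : (Fin n → ℝ) → (Fin n → ℝ))
    (hiso : ∀ v : Fin n → ℝ,
      (∀ i j, r i j → iso v i ≤ iso v j) ∧
      ∀ z : Fin n → ℝ, (∀ i j, r i j → z i ≤ z j) →
        ∑ i, (v i - iso v i) ^ 2 ≤ ∑ i, (v i - z i) ^ 2)
    (Mx : ℝ) (a : Fin n → ℝ) (ha : ∀ i, |a i| ≤ Mx)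
    (y y' : Fin n → ℝ) :
    (∑ i, |iso y i - iso y' i| ≤ ∑ i, |y i - y' i|) ∧
    |(∑ i, a i * iso y i) - ∑ i, a i * iso y' i| ≤ Mx * ∑ i, |y i - y' i| := by
  have hproj : ∀ v, IsNearestPoint (monotoneCone r) v (iso v) := hiso
  have hmono : Monotone iso := fun v v' hv =>
    (hproj v).le_of_le (convex_monotoneCone r)
      (fun _ _ => inf_mem_monotoneCone) (fun _ _ => sup_mem_monotoneCone)
      (hproj v') hv
  have hsum : ∀ v, ∑ i, iso v i = ∑ i, v i := fun v =>
    (hproj v).sum_eq (convex_monotoneCone r) (fun _ => add_const_mem_monotoneCone)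
  have hl1 := sum_abs_sub_le_of_monotone_of_sum_eq hmono hsum y y'
  refine ⟨hl1, ?_⟩
  rw [← sum_sub_distrib]
  simp only [← mul_sub]
  refine (abs_sum_mul_le ha).trans ?_
  rcases isEmpty_or_nonempty (Fin n) with _ | ⟨⟨i₀⟩⟩
  · simp
  · exact mul_le_mul_of_nonneg_left hl1 ((abs_nonneg _).trans (ha i₀))
end

section
/- Let u in R^p be a unit vector with support S of size at most s, let P_S denote coordinate projection onto S, and let P_{u}^perp denote orthogonal projection onto the hyperplane orthogonal to u. Then for any vector v in R^p and step size eta > 0, the hard thresholding of w = u + eta * P_{u}^perp(v) at level s satisfies ||Psi_s(w)||_2 >= 1. Consequently Psi_s(w)/||Psi_s(w)||_2 is the projection of Psi_s(w) onto the unit ball, and for any unit vector u_star, || Psi_s(w)/||Psi_s(w)||_2 - u_star ||_2 <= || Psi_s(w) - u_star ||_2. -/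
/-!
Since `u` is supported in `S` and the perturbation `z = η P_u^⊥ v` is orthogonal to `u`,
`∑_{i ∈ S} w_i² = ‖u‖² + 2⟪u, z⟫ + ∑_{i ∈ S} z_i² ≥ 1`. Hard thresholding keeps the `s`
largest entries and `|S| ≤ s`, so `‖Ψ‖² = ∑_{i ∈ T} w_i²` is at least as large. Finally, for
`‖x‖ ≥ 1` the normalization `x / ‖x‖` is the metric projection onto the unit ball, which
is nonexpansive towards points of the ball.
-/

namespace Finset

theorem sum_le_sum_of_card_le_of_dominates {ι M : Type*} [DecidableEq ι] [AddCommMonoid M]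
    [LinearOrder M] [IsOrderedAddMonoid M] {S T : Finset ι} (g : ι → M) (hcard : #S ≤ #T)
    (hg : ∀ i ∈ T, 0 ≤ g i) (hdom : ∀ i ∈ T, ∀ j ∉ T, g j ≤ g i) :
    ∑ i ∈ S, g i ≤ ∑ i ∈ T, g i := by
  rw [← sum_inter_add_sum_sdiff S T, ← sum_inter_add_sum_sdiff T S, inter_comm]
  gcongr _ + ?_
  have hcard' : #(S \ T) ≤ #(T \ S) := by
    grind [card_sdiff_add_card_inter]
  obtain hTS | ⟨i₀, hi₀, hmin⟩ := (T \ S).eq_empty_or_nonempty.imp_right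
    (exists_min_image (T \ S) g)
  · rw [hTS, card_empty, Nat.le_zero, card_eq_zero] at hcard'
    rw [hcard', hTS]
  have hi₀T := (mem_sdiff.mp hi₀).1
  calc ∑ j ∈ S \ T, g j ≤ #(S \ T) • g i₀ :=
        sum_le_card_nsmul _ _ _ fun j hj => hdom i₀ hi₀T j (mem_sdiff.mp hj).2
    _ ≤ #(T \ S) • g i₀ := nsmul_le_nsmul_left (hg i₀ hi₀T) hcard'
    _ ≤ ∑ i ∈ T \ S, g i := card_nsmul_le_sum _ _ _ hmin

end Finset

theorem norm_sq_le_sum_sq_add_of_inner_eq_zero {ι : Type*} [Fintype ι]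
    {u z : EuclideanSpace ℝ ι} {S : Finset ι} (hS : ∀ i, u i ≠ 0 → i ∈ S)
    (hz : inner ℝ z u = 0) : ‖u‖ ^ 2 ≤ ∑ i ∈ S, (u + z) i ^ 2 :=
  calc ‖u‖ ^ 2 = ∑ i, u i * (u i + 2 * z i) := by
        have hz' : ∑ i, u i * z i = 0 := by simpa [PiLp.inner_apply] using hz
        simp only [EuclideanSpace.real_norm_sq_eq, mul_add, Finset.sum_add_distrib]
        simp only [mul_left_comm _ (2 : ℝ), ← Finset.mul_sum, hz', mul_zero, add_zero, sq]
    _ = ∑ i ∈ S, u i * (u i + 2 * z i) :=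
        (Finset.sum_subset S.subset_univ fun i _ hi => by
          rw [not_not.mp (mt (hS i) hi), zero_mul]).symm
    _ ≤ ∑ i ∈ S, (u + z) i ^ 2 := Finset.sum_le_sum fun i _ => by
        rw [PiLp.add_apply]; nlinarith [sq_nonneg (z i)]

theorem inner_sub_inner_smul_self_eq_zero {E : Type*} [NormedAddCommGroup E]
    [InnerProductSpace ℝ E] {u : E} (hu : ‖u‖ = 1) (v : E) :
    inner ℝ (v - inner ℝ v u • u) u = 0 := by
  rw [inner_sub_left, inner_smul_left, real_inner_self_eq_norm_sq, hu]
  simp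

theorem norm_inv_norm_smul_sub_le {E : Type*} [NormedAddCommGroup E]
    [InnerProductSpace ℝ E] {x y : E} (hx : 1 ≤ ‖x‖) (hy : ‖y‖ ≤ 1) :
    ‖‖x‖⁻¹ • x - y‖ ≤ ‖x - y‖ := by
  have hx₀ : 0 < ‖x‖ := one_pos.trans_le hx
  have hxy : inner ℝ x y / ‖x‖ ≤ 1 := by
    rw [div_le_one hx₀]
    calc inner ℝ x y ≤ ‖x‖ * ‖y‖ := real_inner_le_norm x y
      _ ≤ ‖x‖ := mul_le_of_le_one_right hx₀.le hy
  have hsq : ‖x - y‖ ^ 2 - ‖‖x‖⁻¹ • x - y‖ ^ 2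
      = (‖x‖ - 1) * (‖x‖ + 1 - 2 * (inner ℝ x y / ‖x‖)) := by
    rw [norm_sub_sq_real, norm_sub_sq_real, norm_smul, real_inner_smul_left, norm_inv, norm_norm]
    field_simp
    ring
  have : ‖‖x‖⁻¹ • x - y‖ ^ 2 ≤ ‖x - y‖ ^ 2 := by
    nlinarith
  exact (pow_le_pow_iff_left₀ (norm_nonneg _) (norm_nonneg _) two_ne_zero).mp this

theorem stmt_10_general (p s : ℕ)
    (u : EuclideanSpace ℝ (Fin p)) (hu : ‖u‖ = 1)
    (S : Finset (Fin p)) (hSsupp : ∀ i, u i ≠ 0 → i ∈ S) (hScard : S.card ≤ s)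
    (v : EuclideanSpace ℝ (Fin p)) (η : ℝ)
    (w : EuclideanSpace ℝ (Fin p))
    (hw : w = u + η • (v - (inner ℝ v u : ℝ) • u))
    (T : Finset (Fin p)) (hT : T.card = s)
    (hdom : ∀ i ∈ T, ∀ j ∉ T, |w j| ≤ |w i|)
    (Ψ : EuclideanSpace ℝ (Fin p)) (hΨ : ∀ i, Ψ i = if i ∈ T then w i else 0)
    (ustar : EuclideanSpace ℝ (Fin p)) (hustar : ‖ustar‖ = 1) :
    1 ≤ ‖Ψ‖ ∧ ‖(1 / ‖Ψ‖) • Ψ - ustar‖ ≤ ‖Ψ - ustar‖ := by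
  have hw_S : 1 ≤ ∑ i ∈ S, w i ^ 2 := by
    have hz : inner ℝ (η • (v - inner ℝ v u • u)) u = 0 := by
      rw [real_inner_smul_left, inner_sub_inner_smul_self_eq_zero hu, mul_zero]
    simpa [hu, ← hw] using norm_sq_le_sum_sq_add_of_inner_eq_zero hSsupp hz
  have hS_T : ∑ i ∈ S, w i ^ 2 ≤ ∑ i ∈ T, w i ^ 2 :=
    Finset.sum_le_sum_of_card_le_of_dominates _ (hScard.trans hT.ge) (fun i _ => sq_nonneg _)
      fun i hi j hj => sq_le_sq.mpr (hdom i hi j hj)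
  have hΨ_sq : ‖Ψ‖ ^ 2 = ∑ i ∈ T, w i ^ 2 := by
    simp [EuclideanSpace.real_norm_sq_eq, hΨ, Finset.sum_ite_mem]
  have hΨ_norm : 1 ≤ ‖Ψ‖ := (one_le_sq_iff₀ (norm_nonneg _)).mp (by linarith)
  rw [one_div]
  exact ⟨hΨ_norm, norm_inv_norm_smul_sub_le hΨ_norm hustar.le⟩

/-- Normalization step: for a unit `s`-sparse vector `u` with support contained in
`S` (`|S| ≤ s`), and `w = u + η P_u^⊥ v`, the hard thresholding `Ψ` of `w` at level
`s` has norm at least `1`; consequently normalizing `Ψ` is a projection onto the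
unit ball and can only decrease the distance to any unit vector `u⋆`. -/
theorem stmt_10 (p s : ℕ) (hs : 0 < s) (hsp : s ≤ p)
    (u : EuclideanSpace ℝ (Fin p)) (hu : ‖u‖ = 1)
    (S : Finset (Fin p)) (hSsupp : ∀ i, u i ≠ 0 → i ∈ S) (hScard : S.card ≤ s)
    (v : EuclideanSpace ℝ (Fin p)) (η : ℝ) (hη : 0 < η)
    (w : EuclideanSpace ℝ (Fin p))
    (hw : w = u + η • (v - (inner ℝ v u : ℝ) • u))
    (T : Finset (Fin p)) (hT : T.card = s)
    (hdom : ∀ i ∈ T, ∀ j ∉ T, |w j| ≤ |w i|)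
    (Ψ : EuclideanSpace ℝ (Fin p)) (hΨ : ∀ i, Ψ i = if i ∈ T then w i else 0)
    (ustar : EuclideanSpace ℝ (Fin p)) (hustar : ‖ustar‖ = 1) :
    1 ≤ ‖Ψ‖ ∧ ‖(1 / ‖Ψ‖) • Ψ - ustar‖ ≤ ‖Ψ - ustar‖ :=
  stmt_10_general p s u hu S hSsupp hScard v η w hw T hT hdom Ψ hΨ ustar hustar
end

section
/- Let x in R^n be non-decreasing with total variation x_n - x_1 <= Lt, and let iso denote isotonic projection with respect to the natural order. For any integer N >= 1, there exist indices 0 = k_0 < k_1 < ... < k_M = n with M <= 2N - 1 such that for every m, both x_{k_m} - x_{k_{m-1}+1} <= Lt/N and, for any second non-decreasing vector v with v_n - v_1 <= Lt, v_{k_m} - v_{k_{m-1}+1} <= Lt/N. -/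
/-!
Put `t ∈ [0, L]` into the grid cell `i` with `t ∈ [i L/N, (i+1) L/N)` (the last cell closed). For
the monotone vectors `x - x 1` and `v - v 1` the sum of their cell indices is a monotone function
`g` with values in `{0, …, 2N - 2}`; cutting `{1, …, n}` into the level sets of `g` gives at most
`2N - 1` blocks, and on each block both vectors stay in one cell, so they vary by at most `L/N`.
-/

theorem exists_blocks_of_monotone {g : ℕ → ℕ} (hg : Monotone g) {n : ℕ} (hn : 1 ≤ n) :
    ∃ M : ℕ, ∃ k : ℕ → ℕ, 1 ≤ M ∧ M ≤ g n - g 1 + 1 ∧ k 0 = 0 ∧ k M = n ∧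
      (∀ m < M, k m < k (m + 1)) ∧
      ∀ m, 1 ≤ m → m ≤ M → g (k m) = g (k (m - 1) + 1) := by
  induction n, hn using Nat.le_induction with
  | base =>
    refine ⟨1, id, le_rfl, by omega, rfl, rfl, by simp, fun m hm1 hm2 => ?_⟩
    obtain rfl : m = 1 := by omega
    rfl
  | succ n hn ih =>
    obtain ⟨M, k, hM, hMg, hk0, hkM, hk, hblock⟩ := ih
    have hg1 : g 1 ≤ g n := hg hn
    rcases (hg (Nat.le_add_right n 1)).eq_or_lt with hgn | hgn
    · refine ⟨M, fun m => if m < M then k m else n + 1, hM, by omega, (if_pos hM).trans hk0,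
        by simp, fun m hm => ?_, fun m hm1 hm2 => ?_⟩
      · dsimp only
        rw [if_pos hm]
        split_ifs with h
        · exact hk m hm
        · have := hk m hm
          rw [show m + 1 = M by omega, hkM] at this
          omega
      · dsimp only
        rw [if_pos (show m - 1 < M by omega)]
        split_ifs with h
        · exact hblock m hm1 hm2
        · obtain rfl : m = M := by omega
          rw [← hgn, ← hkM, hblock m hm1 hm2]
    · refine ⟨M + 1, fun m => if m ≤ M then k m else n + 1, by omega, by omega,
        (if_pos M.zero_le).trans hk0, by simp, fun m hm => ?_, fun m hm1 hm2 => ?_⟩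
      · dsimp only
        rw [if_pos (show m ≤ M by omega)]
        split_ifs with h
        · exact hk m h
        · obtain rfl : m = M := by omega
          omega
      · dsimp only
        rw [if_pos (show m - 1 ≤ M by omega)]
        split_ifs with h
        · exact hblock m hm1 h
        · obtain rfl : m = M + 1 := by omega
          rw [Nat.add_sub_cancel, hkM]

/-- Clamping at `N - 1` makes `t = L` fall into the last cell rather than an `N`-th one. -/
noncomputable def gridCell (N : ℕ) (L t : ℝ) : ℕ := min ⌊t * N / L⌋₊ (N - 1)

theorem gridCell_le (N : ℕ) (L t : ℝ) : gridCell N L t ≤ N - 1 := min_le_right _ _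

@[simp] theorem gridCell_zero (N : ℕ) (L : ℝ) : gridCell N L 0 = 0 := by simp [gridCell]

theorem gridCell_mono {N : ℕ} {L : ℝ} (hL : 0 ≤ L) : Monotone (gridCell N L) := fun s t hst =>
  min_le_min_right _ (Nat.floor_mono (by gcongr))

theorem sub_le_div_of_gridCell_eq {N : ℕ} (hN : 1 ≤ N) {L a b : ℝ} (hL : 0 ≤ L)
    (ha : 0 ≤ a) (hb : b ≤ L) (h : gridCell N L a = gridCell N L b) : b - a ≤ L / N := by
  rcases hL.eq_or_lt with rfl | hL
  · rw [zero_div]; linarith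
  have hN' : (0 : ℝ) < N := by exact_mod_cast hN
  have hA : (gridCell N L a : ℝ) ≤ a * N / L := by
    calc (gridCell N L a : ℝ) ≤ ⌊a * N / L⌋₊ := by exact_mod_cast min_le_left _ _
      _ ≤ a * N / L := Nat.floor_le (by positivity)
  have hB : b * N / L ≤ gridCell N L b + 1 := by
    rcases min_cases ⌊b * N / L⌋₊ (N - 1) with ⟨hc, -⟩ | ⟨hc, -⟩ <;>
      rw [gridCell, hc]
    · exact (Nat.lt_floor_add_one _).le
    · rw [Nat.cast_sub hN, Nat.cast_one, sub_add_cancel, div_le_iff₀ hL]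
      nlinarith
  rw [le_div_iff₀ hN']
  rw [h] at hA
  have : (b - a) * N / L ≤ 1 := by rw [sub_mul, sub_div]; linarith
  rwa [div_le_one hL] at this

theorem sub_le_div_of_gridCell_eq_of_monotone {N : ℕ} (hN : 1 ≤ N) {L : ℝ} (hL : 0 ≤ L)
    {y : ℕ → ℝ} (hy : Monotone y) {n i j : ℕ} (hi : 1 ≤ i) (hj : j ≤ n)
    (hyn : y n - y 1 ≤ L) (h : gridCell N L (y i - y 1) = gridCell N L (y j - y 1)) :
    y j - y i ≤ L / N := by
  have := sub_le_div_of_gridCell_eq hN hL (sub_nonneg.2 (hy hi)) (by linarith [hy hj]) h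
  linarith

/-- Partitioning two non-decreasing vectors of range at most `Lt` into at most
`2N - 1` consecutive blocks, on each of which both vectors vary by at most
`Lt/N`. Indices are 1-based: the blocks are `{k_{m-1}+1, …, k_m}`. -/
theorem stmt_12 (n N : ℕ) (hn : 1 ≤ n) (hN : 1 ≤ N) (Lt : ℝ) (hLt : 0 ≤ Lt)
    (x v : ℕ → ℝ) (hx : Monotone x) (hv : Monotone v)
    (hxr : x n - x 1 ≤ Lt) (hvr : v n - v 1 ≤ Lt) :
    ∃ M : ℕ, ∃ k : ℕ → ℕ, 1 ≤ M ∧ M ≤ 2 * N - 1 ∧ k 0 = 0 ∧ k M = n ∧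
      (∀ m < M, k m < k (m + 1)) ∧
      ∀ m, 1 ≤ m → m ≤ M →
        x (k m) - x (k (m - 1) + 1) ≤ Lt / N ∧
        v (k m) - v (k (m - 1) + 1) ≤ Lt / N := by
  have hg : Monotone fun j => gridCell N Lt (x j - x 1) + gridCell N Lt (v j - v 1) :=
    fun i j hij => add_le_add (gridCell_mono hLt (sub_le_sub_right (hx hij) _))
      (gridCell_mono hLt (sub_le_sub_right (hv hij) _))
  obtain ⟨M, k, hM, hMg, hk0, hkM, hk, hblock⟩ := exists_blocks_of_monotone hg hn
  have hxn := gridCell_le N Lt (x n - x 1)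
  have hvn := gridCell_le N Lt (v n - v 1)
  refine ⟨M, k, hM, by simp only [sub_self, gridCell_zero] at hMg; omega, hk0, hkM, hk,
    fun m hm1 hm2 => ?_⟩
  have hlt : k (m - 1) + 1 ≤ k m := by
    have := hk (m - 1) (by omega)
    rwa [Nat.sub_add_cancel hm1] at this
  have hkn : k m ≤ n :=
    hkM ▸ (strictMonoOn_Iic_of_lt_succ hk).monotoneOn hm2 (Set.mem_Iic.2 le_rfl) hm2
  have hcx := gridCell_mono (N := N) hLt (sub_le_sub_right (hx hlt) (x 1))
  have hcv := gridCell_mono (N := N) hLt (sub_le_sub_right (hv hlt) (v 1))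
  have hgm := hblock m hm1 hm2
  exact ⟨sub_le_div_of_gridCell_eq_of_monotone hN hLt hx (by omega) hkn hxr (by omega),
    sub_le_div_of_gridCell_eq_of_monotone hN hLt hv (by omega) hkn hvr (by omega)⟩
end
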